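/- Let G be a group, N ⊴ G of finite index, L an irreducible finite-dimensional N-representation over an algebraically closed field k whose stabilizer in G is all of G (i.e. ᵍL ≅ L for all g ∈ G modulo N). Fix a section ι : A → G of A = G/N with ι(1)=1, and isomorphisms θ_a : L → ^{ι(a)}L of N-representations with θ_1 = id. Define α(a,b) ∈ k^× by φ_{a,b} ∘ ^{ι(a)}θ_b ∘ θ_a = α(a,b)·θ_{ab}, where φ_{a,b} is the isomorphism ^{ι(a)ι(b)}L → ^{ι(ab)}L induced by the action of γ(a,b). Then α is a 2-cocycle: α(a,b)α(ab,c) = α(a,bc)α(b,c) for all a,b,c ∈ A, and α(1,a) = α(a,1) = 1. -/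
import Mathlib


section CliffordDefs

variable {k G V : Type*} [Field k] [Group G] [AddCommGroup V] [Module k V]

/-- A `k`-submodule `W` is stable under the elements of `S` acting through `ρ`. -/
def repStable (ρ : Representation k G V) (S : Set G) (W : Submodule k V) : Prop :=
  ∀ g ∈ S, ∀ v ∈ W, ρ g v ∈ W

/-- The representation `ρ` is irreducible (simple). -/
def repIrreducible (ρ : Representation k G V) : Prop :=
  Nontrivial V ∧ ∀ W : Submodule k V, repStable ρ Set.univ W → W = ⊥ ∨ W = ⊤

end CliffordDefs

lemma clifford_mem_aux {G : Type*} [Group G] (N : Subgroup G) [N.Normal] (ι : G ⧸ N → G)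
    (hι : ∀ a, QuotientGroup.mk' N (ι a) = a) (a b : G ⧸ N) :
    (ι (a * b))⁻¹ * ι a * ι b ∈ N := by
  rw [← QuotientGroup.eq_one_iff]
  show (QuotientGroup.mk' N) ((ι (a * b))⁻¹ * ι a * ι b) = 1
  simp only [map_mul, map_inv, hι]
  group

/-- Let `N ⊴ G` of finite index, `L = (V, ρ)` an irreducible finite-dimensional
representation of `N` over an algebraically closed field whose stabilizer in `G` is all
of `G`, witnessed by isomorphisms `θ_a : L ≅ {}^{ι(a)}L` for `a ∈ A = G ⧸ N` with
`θ_1 = id` (for a section `ι` with `ι 1 = 1`).  Let `α(a,b) ∈ kˣ` be defined by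
`γ(a,b) ∘ θ_b ∘ θ_a = α(a,b) • θ_{ab}` where `γ(a,b) = ι(ab)⁻¹ι(a)ι(b) ∈ N` acts via `ρ`.
Then `α` is a normalized 2-cocycle: `α(1,a) = α(a,1) = 1` and
`α(a,b)α(ab,c) = α(a,bc)α(b,c)`. -/
theorem stabilizer_cocycle_is_two_cocycle {k G V : Type*} [Field k] [IsAlgClosed k]
    [Group G] [AddCommGroup V] [Module k V] [FiniteDimensional k V]
    (N : Subgroup G) [hN : N.Normal] [Finite (G ⧸ N)]
    (ρ : Representation k N V) (hirr : repIrreducible ρ)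
    (ι : G ⧸ N → G) (hι : ∀ a, QuotientGroup.mk' N (ι a) = a) (hι1 : ι 1 = 1)
    (θ : G ⧸ N → (V ≃ₗ[k] V)) (hθ1 : θ 1 = LinearEquiv.refl k V)
    (hθ : ∀ (a : G ⧸ N) (n : N) (v : V),
      θ a (ρ n v) =
        ρ ⟨(ι a)⁻¹ * ↑n * ι a, by simpa using hN.conj_mem _ n.2 (ι a)⁻¹⟩ (θ a v))
    (α : G ⧸ N → G ⧸ N → kˣ)
    (hα : ∀ (a b : G ⧸ N) (v : V),
      ρ ⟨(ι (a * b))⁻¹ * ι a * ι b, by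
          rw [← QuotientGroup.eq_one_iff]
          show (QuotientGroup.mk' N) ((ι (a * b))⁻¹ * ι a * ι b) = 1
          simp only [map_mul, map_inv, hι]
          group⟩
        (θ b (θ a v)) = (α a b : k) • θ (a * b) v) :
    (∀ a, α 1 a = 1 ∧ α a 1 = 1) ∧
    (∀ a b c, (α a b : k) * α (a * b) c = α a (b * c) * α b c) := by
  have hnt : Nontrivial V := hirr.1
  have hsc : ∀ c d : k, (∀ v : V, c • v = d • v) → c = d := by
    intro c d h
    obtain ⟨v0, hv0⟩ := exists_ne (0 : V)
    have h2 : (c - d) • v0 = 0 := by rw [sub_smul, h v0, sub_self]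
    rcases smul_eq_zero.mp h2 with h' | h'
    · exact sub_eq_zero.mp h'
    · exact absurd h' hv0
  set n : G ⧸ N → G ⧸ N → N := fun x y => ⟨_, clifford_mem_aux N ι hι x y⟩ with hn
  set m : G ⧸ N → N → N := fun a nn =>
    ⟨(ι a)⁻¹ * ↑nn * ι a, by simpa using hN.conj_mem _ nn.2 (ι a)⁻¹⟩ with hm
  have hα' : ∀ (x y : G ⧸ N) (v : V),
      ρ (n x y) (θ y (θ x v)) = (α x y : k) • θ (x * y) v := hα
  have hθ' : ∀ (a : G ⧸ N) (nn : N) (v : V),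
      θ a (ρ nn v) = ρ (m a nn) (θ a v) := hθ
  have hρ : ∀ (x y : N) (w : V), ρ x (ρ y w) = ρ (x * y) w := by
    intro x y w; rw [map_mul]; rfl
  constructor
  · intro a
    have none : ∀ b : G ⧸ N, n 1 b = 1 := by
      intro b; ext; simp [hn, hι1]
    have none' : ∀ b : G ⧸ N, n b 1 = 1 := by
      intro b; ext; simp [hn, hι1]
    constructor
    · have key : ∀ v : V, θ a v = (α 1 a : k) • θ a v := by
        intro v
        have h := hα' 1 a v
        rw [none, map_one, hθ1, one_mul] at h
        simpa using h
      refine Units.ext ?_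
      refine (hsc _ 1 ?_).trans rfl
      intro w
      have := key ((θ a).symm w)
      rw [LinearEquiv.apply_symm_apply] at this
      rw [one_smul]
      exact this.symm
    · have key : ∀ v : V, θ a v = (α a 1 : k) • θ a v := by
        intro v
        have h := hα' a 1 v
        rw [none', map_one, hθ1, mul_one] at h
        simpa using h
      refine Units.ext ?_
      refine (hsc _ 1 ?_).trans rfl
      intro w
      have := key ((θ a).symm w)
      rw [LinearEquiv.apply_symm_apply] at this
      rw [one_smul]
      exact this.symm
  · intro a b c
    have key : n (a * b) c * m c (n a b) = n a (b * c) * n b c := by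
      have hmul : a * b * c = a * (b * c) := mul_assoc a b c
      ext
      simp only [hn, hm, Subgroup.coe_mul]
      rw [hmul]
      group
    refine hsc _ _ ?_
    intro w
    set v := (θ (a * (b * c))).symm w with hv
    have h1 : θ c (ρ (n a b) (θ b (θ a v))) = θ c ((α a b : k) • θ (a * b) v) :=
      congrArg (θ c) (hα' a b v)
    rw [hθ' c (n a b), map_smul] at h1
    have h2 := congrArg (ρ (n (a * b) c)) h1
    rw [map_smul, hα' (a * b) c v, hρ] at h2
    have h3 := congrArg (ρ (n a (b * c))) (hα' b c (θ a v))
    rw [map_smul, hα' a (b * c) v, hρ, ← key] at h3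
    have h4 := h2.symm.trans h3
    rw [mul_assoc a b c] at h4
    rw [smul_smul, smul_smul, hv, LinearEquiv.apply_symm_apply] at h4
    rw [h4, mul_comm (α b c : k)]
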